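/- Let f₀ : Ω ⊆ ℝ⁴ → ℂ(i₁) be a nonvanishing twice continuously differentiable particular solution of the complexified Schrödinger equation (Δ_ℂ − ν(z₁, z₂))f₀ = 0. Then for any ℂ(i₁)-valued twice continuously differentiable function φ on Ω the following equality holds: (Δ_ℂ − ν)φ = 4(∂_ω̄ + (∂_ω f₀ / f₀)C)(∂_ω − (∂_ω f₀ / f₀)C)φ. -/

import Mathlib

noncomputable section

open Complex Filter Topology

/-- The bicomplex numbers `𝕋 = {z₁ + z₂ i₂ : z₁, z₂ ∈ ℂ(i₁)}`, represented by the pair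
of `ℂ(i₁)`-components `(z₁, z₂)`. -/
@[ext] structure Bicomplex : Type where
  z1 : ℂ
  z2 : ℂ

namespace Bicomplex

instance : Zero Bicomplex := ⟨⟨0, 0⟩⟩
instance : One Bicomplex := ⟨⟨1, 0⟩⟩
instance : Add Bicomplex := ⟨fun w v => ⟨w.z1 + v.z1, w.z2 + v.z2⟩⟩
instance : Neg Bicomplex := ⟨fun w => ⟨-w.z1, -w.z2⟩⟩
instance : Mul Bicomplex := ⟨fun w v => ⟨w.z1 * v.z1 - w.z2 * v.z2, w.z1 * v.z2 + w.z2 * v.z1⟩⟩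

@[simp] lemma zero_z1 : (0 : Bicomplex).z1 = 0 := rfl
@[simp] lemma zero_z2 : (0 : Bicomplex).z2 = 0 := rfl
@[simp] lemma one_z1 : (1 : Bicomplex).z1 = 1 := rfl
@[simp] lemma one_z2 : (1 : Bicomplex).z2 = 0 := rfl
@[simp] lemma add_z1 (w v : Bicomplex) : (w + v).z1 = w.z1 + v.z1 := rfl
@[simp] lemma add_z2 (w v : Bicomplex) : (w + v).z2 = w.z2 + v.z2 := rfl
@[simp] lemma neg_z1 (w : Bicomplex) : (-w).z1 = -w.z1 := rfl
@[simp] lemma neg_z2 (w : Bicomplex) : (-w).z2 = -w.z2 := rfl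
@[simp] lemma mul_z1 (w v : Bicomplex) : (w * v).z1 = w.z1 * v.z1 - w.z2 * v.z2 := rfl
@[simp] lemma mul_z2 (w v : Bicomplex) : (w * v).z2 = w.z1 * v.z2 + w.z2 * v.z1 := rfl

/-- The bicomplex numbers form a commutative ring. -/
instance : CommRing Bicomplex where
  nsmul n w := ⟨n • w.z1, n • w.z2⟩
  zsmul n w := ⟨n • w.z1, n • w.z2⟩
  nsmul_zero a := by ext <;> exact zero_smul ℕ _
  nsmul_succ n a := by ext <;> exact succ_nsmul _ n
  zsmul_zero' a := by ext <;> exact zero_smul ℤ _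
  zsmul_succ' n a := by ext <;> (show ((n.succ : ℤ) • _ : ℂ) = (n : ℤ) • _ + _; simp; ring)
  zsmul_neg' n a := by ext <;> (show ((Int.negSucc n) • _ : ℂ) = -(((n.succ : ℤ)) • _); simp [Int.negSucc_eq]; ring)
  add_assoc a b c := by ext <;> simp <;> ring
  zero_add a := by ext <;> simp
  add_zero a := by ext <;> simp
  add_comm a b := by ext <;> simp <;> ring
  neg_add_cancel a := by ext <;> simp
  mul_assoc a b c := by ext <;> simp <;> ring
  one_mul a := by ext <;> simp
  mul_one a := by ext <;> simp
  left_distrib a b c := by ext <;> simp <;> ring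
  right_distrib a b c := by ext <;> simp <;> ring
  zero_mul a := by ext <;> simp
  mul_zero a := by ext <;> simp
  mul_comm a b := by ext <;> simp <;> ring

/-- Inverse: `w⁻¹ = w†₂ / (z₁² + z₂²)` (junk value `0/0` on the null-cone). -/
instance : Inv Bicomplex :=
  ⟨fun w => ⟨w.z1 / (w.z1 ^ 2 + w.z2 ^ 2), -w.z2 / (w.z1 ^ 2 + w.z2 ^ 2)⟩⟩

instance : Div Bicomplex := ⟨fun w v => w * v⁻¹⟩

/-- Embedding of `ℂ(i₁)` into `𝕋`. -/
def ofComplex (c : ℂ) : Bicomplex := ⟨c, 0⟩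

/-- Embedding of `ℝ` into `𝕋`. -/
def ofReal (t : ℝ) : Bicomplex := ⟨(t : ℂ), 0⟩

/-- The imaginary unit `i₁`. -/
def i1 : Bicomplex := ⟨Complex.I, 0⟩

/-- The imaginary unit `i₂`. -/
def i2 : Bicomplex := ⟨0, 1⟩

/-- The hyperbolic unit `j = i₁ i₂`. -/
def jj : Bicomplex := ⟨0, Complex.I⟩

/-- The idempotent `e₁ = (1 + j)/2`. -/
def e1 : Bicomplex := ⟨1 / 2, Complex.I / 2⟩

/-- The idempotent `e₂ = (1 - j)/2`. -/
def e2 : Bicomplex := ⟨1 / 2, -(Complex.I) / 2⟩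

/-- The projection `P₁(z₁ + z₂ i₂) = z₁ - z₂ i₁`. -/
def P1 (w : Bicomplex) : ℂ := w.z1 - w.z2 * Complex.I

/-- The projection `P₂(z₁ + z₂ i₂) = z₁ + z₂ i₁`. -/
def P2 (w : Bicomplex) : ℂ := w.z1 + w.z2 * Complex.I

/-- The conjugation `w†₁ = z̄₁ + z̄₂ i₂`. -/
def dag1 (w : Bicomplex) : Bicomplex := ⟨(starRingEnd ℂ) w.z1, (starRingEnd ℂ) w.z2⟩

/-- The conjugation `w†₂ = z₁ - z₂ i₂`. -/
def dag2 (w : Bicomplex) : Bicomplex := ⟨w.z1, -w.z2⟩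

/-- The conjugation `w†₃ = z̄₁ - z̄₂ i₂`. -/
def dag3 (w : Bicomplex) : Bicomplex := ⟨(starRingEnd ℂ) w.z1, -((starRingEnd ℂ) w.z2)⟩

/-- `𝕋` as `ℂ × ℂ`. -/
def toProd (w : Bicomplex) : ℂ × ℂ := (w.z1, w.z2)

/-- `ℂ × ℂ` as `𝕋`. -/
def ofProd (p : ℂ × ℂ) : Bicomplex := ⟨p.1, p.2⟩

instance : TopologicalSpace Bicomplex := TopologicalSpace.induced toProd inferInstance

/-- The set of points `w` such that `w - w₀` is invertible (i.e. not a zero divisor). -/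
def invertibleDiff (w₀ : Bicomplex) : Set Bicomplex :=
  {w | (w - w₀).z1 ^ 2 + (w - w₀).z2 ^ 2 ≠ 0}

/-- `f` is `𝕋`-differentiable at `w₀` with derivative `d`:
`(f w - f w₀)/(w - w₀) → d` as `w → w₀` with `w - w₀` invertible. -/
def HasTDerivAt (f : Bicomplex → Bicomplex) (d w₀ : Bicomplex) : Prop :=
  Tendsto (fun w => (f w - f w₀) / (w - w₀)) (𝓝[invertibleDiff w₀] w₀) (𝓝 d)

/-- `f` is `𝕋`-holomorphic on `U` if it is `𝕋`-differentiable at each point of `U`. -/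
def THolomorphicOn (f : Bicomplex → Bicomplex) (U : Set Bicomplex) : Prop :=
  ∀ w ∈ U, ∃ d, HasTDerivAt f d w

/-- `f` viewed as a map `ℂ² → ℂ²`. -/
def fProd (f : Bicomplex → Bicomplex) : ℂ × ℂ → ℂ × ℂ := fun p => toProd (f (ofProd p))

/-- `f : 𝕋 → 𝕋` is `n` times continuously (real-)differentiable on `U`. -/
def TContDiffOn (n : ℕ∞) (f : Bicomplex → Bicomplex) (U : Set Bicomplex) : Prop :=
  ContDiffOn ℝ n (fProd f) (toProd '' U)

/-- `g : 𝕋 → ℂ` is `n` times continuously (real-)differentiable on `U`. -/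
def CContDiffOn (n : ℕ∞) (g : Bicomplex → ℂ) (U : Set Bicomplex) : Prop :=
  ContDiffOn ℝ n (fun p => g (ofProd p)) (toProd '' U)

/-- Real partial derivative of `g : 𝕋 → ℂ` at `w` in direction `e`. -/
def pd (e : Bicomplex) (g : Bicomplex → ℂ) (w : Bicomplex) : ℂ :=
  deriv (fun t : ℝ => g (w + ofReal t * e)) 0

/-- Existence of the real partial derivative of `g : 𝕋 → ℂ` at `w` in direction `e`. -/
def pdExists (e : Bicomplex) (g : Bicomplex → ℂ) (w : Bicomplex) : Prop :=
  DifferentiableAt ℝ (fun t : ℝ => g (w + ofReal t * e)) 0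

/-- The scalar (`ℂ(i₁)`-) component `f₁` of `f = f₁ + f₂ i₂`. -/
def s1 (f : Bicomplex → Bicomplex) : Bicomplex → ℂ := fun w => (f w).z1

/-- The vectorial (`ℂ(i₁)`-) component `f₂` of `f = f₁ + f₂ i₂`. -/
def s2 (f : Bicomplex → Bicomplex) : Bicomplex → ℂ := fun w => (f w).z2

/-- Real partial derivative of `f : 𝕋 → 𝕋` in direction `e`. -/
def pdT (e : Bicomplex) (f : Bicomplex → Bicomplex) : Bicomplex → Bicomplex :=
  fun w => ⟨pd e (s1 f) w, pd e (s2 f) w⟩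

/-- Existence of the real partial derivative of `f : 𝕋 → 𝕋` in direction `e`. -/
def pdTExists (e : Bicomplex) (f : Bicomplex → Bicomplex) (w : Bicomplex) : Prop :=
  pdExists e (s1 f) w ∧ pdExists e (s2 f) w

/-- `∂_{z₁} g = ½(∂ₓ g - i₁ ∂_y g)` for `g : 𝕋 → ℂ`. -/
def dz1 (g : Bicomplex → ℂ) : Bicomplex → ℂ :=
  fun w => (pd 1 g w - Complex.I * pd i1 g w) / 2

/-- `∂_{z̄₁} g = ½(∂ₓ g + i₁ ∂_y g)` for `g : 𝕋 → ℂ`. -/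
def dz1bar (g : Bicomplex → ℂ) : Bicomplex → ℂ :=
  fun w => (pd 1 g w + Complex.I * pd i1 g w) / 2

/-- `∂_{z₂} g = ½(∂_p g - i₁ ∂_q g)` for `g : 𝕋 → ℂ`. -/
def dz2 (g : Bicomplex → ℂ) : Bicomplex → ℂ :=
  fun w => (pd i2 g w - Complex.I * pd jj g w) / 2

/-- `∂_{z̄₂} g = ½(∂_p g + i₁ ∂_q g)` for `g : 𝕋 → ℂ`. -/
def dz2bar (g : Bicomplex → ℂ) : Bicomplex → ℂ :=
  fun w => (pd i2 g w + Complex.I * pd jj g w) / 2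

/-- `∂_{z₁}` applied componentwise to `f : 𝕋 → 𝕋`. -/
def dZ1 (f : Bicomplex → Bicomplex) : Bicomplex → Bicomplex :=
  fun w => ⟨dz1 (s1 f) w, dz1 (s2 f) w⟩

/-- `∂_{z₂}` applied componentwise to `f : 𝕋 → 𝕋`. -/
def dZ2 (f : Bicomplex → Bicomplex) : Bicomplex → Bicomplex :=
  fun w => ⟨dz2 (s1 f) w, dz2 (s2 f) w⟩

/-- `∂_{z̄₁}` applied componentwise to `f : 𝕋 → 𝕋`. -/
def dZ1bar (f : Bicomplex → Bicomplex) : Bicomplex → Bicomplex :=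
  fun w => ⟨dz1bar (s1 f) w, dz1bar (s2 f) w⟩

/-- `∂_{z̄₂}` applied componentwise to `f : 𝕋 → 𝕋`. -/
def dZ2bar (f : Bicomplex → Bicomplex) : Bicomplex → Bicomplex :=
  fun w => ⟨dz2bar (s1 f) w, dz2bar (s2 f) w⟩

/-- `∂_ω = ½(∂_{z₁} - i₂ ∂_{z₂})`. -/
def dOm (f : Bicomplex → Bicomplex) : Bicomplex → Bicomplex :=
  fun w => ofComplex (1 / 2) * (dZ1 f w - i2 * dZ2 f w)

/-- `∂_{ω†₂} = ∂_ω̄ = ½(∂_{z₁} + i₂ ∂_{z₂})`. -/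
def dOmBar (f : Bicomplex → Bicomplex) : Bicomplex → Bicomplex :=
  fun w => ofComplex (1 / 2) * (dZ1 f w + i2 * dZ2 f w)

/-- `∂_{ω†₁} = ½(∂_{z̄₁} - i₂ ∂_{z̄₂})`. -/
def dOmDag1 (f : Bicomplex → Bicomplex) : Bicomplex → Bicomplex :=
  fun w => ofComplex (1 / 2) * (dZ1bar f w - i2 * dZ2bar f w)

/-- `∂_{ω†₃} = ½(∂_{z̄₁} + i₂ ∂_{z̄₂})`. -/
def dOmDag3 (f : Bicomplex → Bicomplex) : Bicomplex → Bicomplex :=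
  fun w => ofComplex (1 / 2) * (dZ1bar f w + i2 * dZ2bar f w)

/-- The complexified Laplacian `Δ_ℂ = ∂²_{z₁} + ∂²_{z₂}` acting on `ℂ(i₁)`-valued functions. -/
def lapC (g : Bicomplex → ℂ) : Bicomplex → ℂ :=
  fun w => dz1 (dz1 g) w + dz2 (dz2 g) w

/-- The vector part in the `i₂`-representation `w = ζ₁ + ζ₂ i₁` with `ζ₁, ζ₂ ∈ ℂ(i₂)`:
for `w = x₁ + x₂i₁ + x₃i₂ + x₄j`, `Vec(w) = x₂ + x₄ i₂`, encoded as the complex number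
`x₂ + x₄ i`. -/
def vec2 (w : Bicomplex) : ℂ := ⟨w.z1.im, w.z2.im⟩

/-- Embedding of `ℂ(i₂)` into `𝕋`: the complex number `a + b i` represents `a + b i₂`. -/
def ofC2 (c : ℂ) : Bicomplex := ⟨(c.re : ℂ), (c.im : ℂ)⟩

/-- Multiplication of hyperbolic numbers `ℂ(j) = {x + yj}`, encoded as pairs in `ℝ × ℝ`. -/
def hmul (a b : ℝ × ℝ) : ℝ × ℝ := (a.1 * b.1 + a.2 * b.2, a.1 * b.2 + a.2 * b.1)

/-- Division of hyperbolic numbers (junk value when the denominator is a zero divisor). -/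
def hdiv (a b : ℝ × ℝ) : ℝ × ℝ :=
  hmul a (b.1 / (b.1 ^ 2 - b.2 ^ 2), -b.2 / (b.1 ^ 2 - b.2 ^ 2))

/-- Embedding of the hyperbolic numbers `ℂ(j)` into `𝕋`: `(x, y) ↦ x + y j`. -/
def ofHyp (a : ℝ × ℝ) : Bicomplex := ⟨(a.1 : ℂ), (a.2 : ℂ) * Complex.I⟩

/-- The vector part in the `j`-representation `w = ζ₁ + ζ₂ i₁` with `ζ₁, ζ₂ ∈ ℂ(j)`:
for `w = x₁ + x₂i₁ + x₃i₂ + x₄j`, `Vec(w) = x₂ - x₃ j`, encoded as the pair `(x₂, -x₃)`. -/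
def vec3 (w : Bicomplex) : ℝ × ℝ := (w.z1.im, -w.z2.re)

/-- The `𝕋`-cartesian set `X₁ ×ₑ X₂ = {w : P₁ w ∈ X₁ ∧ P₂ w ∈ X₂}`. -/
def eProd (X₁ X₂ : Set ℂ) : Set Bicomplex := {w | P1 w ∈ X₁ ∧ P2 w ∈ X₂}

/-- `(F, G)` is an `i₁`-generating pair on `D`. -/
def GenPair1 (F G : Bicomplex → Bicomplex) (D : Set Bicomplex) : Prop :=
  TContDiffOn 2 F D ∧ TContDiffOn 2 G D ∧ ∀ w ∈ D, (dag2 (F w) * G w).z2 ≠ 0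

/-- `(F, G)` is an `i₂`-generating pair on `D`. -/
def GenPair2 (F G : Bicomplex → Bicomplex) (D : Set Bicomplex) : Prop :=
  TContDiffOn 2 F D ∧ TContDiffOn 2 G D ∧ ∀ w ∈ D, vec2 (dag1 (F w) * G w) ≠ 0

/-- `(F, G)` is a `j`-generating pair on `D`. -/
def GenPairJ (F G : Bicomplex → Bicomplex) (D : Set Bicomplex) : Prop :=
  TContDiffOn 2 F D ∧ TContDiffOn 2 G D ∧ ∀ w ∈ D, vec3 (dag3 (F w) * G w) ≠ 0

/-- The unique `λ₀ ∈ ℂ(i₁)` with `w(ω₀) = λ₀ F(ω₀) + μ₀ G(ω₀)`. -/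
def lam1 (F G wf : Bicomplex → Bicomplex) (ω₀ : Bicomplex) : ℂ :=
  (dag2 (wf ω₀) * G ω₀).z2 / (dag2 (F ω₀) * G ω₀).z2

/-- The unique `μ₀ ∈ ℂ(i₁)` with `w(ω₀) = λ₀ F(ω₀) + μ₀ G(ω₀)`. -/
def mu1 (F G wf : Bicomplex → Bicomplex) (ω₀ : Bicomplex) : ℂ :=
  -((dag2 (wf ω₀) * F ω₀).z2 / (dag2 (F ω₀) * G ω₀).z2)

/-- `w` has `(F,G)_{i₁}`-derivative `d` at `ω₀`. -/
def HasFGDeriv1 (F G wf : Bicomplex → Bicomplex) (d ω₀ : Bicomplex) : Prop :=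
  Tendsto
    (fun ω => (wf ω - ofComplex (lam1 F G wf ω₀) * F ω - ofComplex (mu1 F G wf ω₀) * G ω)
        / (ω - ω₀))
    (𝓝[invertibleDiff ω₀] ω₀) (𝓝 d)

/-- The unique `λ₀ ∈ ℂ(j)` with `w(ω₀) = λ₀ F(ω₀) + μ₀ G(ω₀)`. -/
def lamJ (F G wf : Bicomplex → Bicomplex) (ω₀ : Bicomplex) : ℝ × ℝ :=
  hdiv (vec3 (dag3 (wf ω₀) * G ω₀)) (vec3 (dag3 (F ω₀) * G ω₀))

/-- The unique `μ₀ ∈ ℂ(j)` with `w(ω₀) = λ₀ F(ω₀) + μ₀ G(ω₀)`. -/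
def muJ (F G wf : Bicomplex → Bicomplex) (ω₀ : Bicomplex) : ℝ × ℝ :=
  -(hdiv (vec3 (dag3 (wf ω₀) * F ω₀)) (vec3 (dag3 (F ω₀) * G ω₀)))

/-- `w` has `(F,G)_j`-derivative `d` at `ω₀`. -/
def HasFGDerivJ (F G wf : Bicomplex → Bicomplex) (d ω₀ : Bicomplex) : Prop :=
  Tendsto
    (fun ω => (wf ω - ofHyp (lamJ F G wf ω₀) * F ω - ofHyp (muJ F G wf ω₀) * G ω) / (ω - ω₀))
    (𝓝[invertibleDiff ω₀] ω₀) (𝓝 d)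

/-- `w` is `(F,G)_j`-pseudoanalytic on `D`. -/
def PseudoanalyticJ (F G wf : Bicomplex → Bicomplex) (D : Set Bicomplex) : Prop :=
  ∀ ω ∈ D, ∃ d, HasFGDerivJ F G wf d ω

/-- `w` has continuous partial derivatives in a neighborhood of `ω₀`. -/
def HasContPartialsNear (f : Bicomplex → Bicomplex) (w₀ : Bicomplex) : Prop :=
  ∃ V ∈ 𝓝 w₀, ∀ e ∈ ({1, i1, i2, jj} : Set Bicomplex),
    (∀ w ∈ V, pdTExists e f w) ∧ ContinuousOn (pdT e f) V

/-! Characteristic coefficients with respect to the `†₂` conjugation (`i₁` case). -/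

def denom2 (F G : Bicomplex → Bicomplex) (w : Bicomplex) : Bicomplex :=
  F w * dag2 (G w) - dag2 (F w) * G w

def aCoef2₁ (F G : Bicomplex → Bicomplex) (w : Bicomplex) : Bicomplex :=
  -((dag1 (F w) * dOmDag1 G w - dOmDag1 F w * dag1 (G w)) / denom2 F G w)

def bCoef2₁ (F G : Bicomplex → Bicomplex) (w : Bicomplex) : Bicomplex :=
  (F w * dOmDag1 G w - dOmDag1 F w * G w) / denom2 F G w

def aCoef2₂ (F G : Bicomplex → Bicomplex) (w : Bicomplex) : Bicomplex :=
  -((dag2 (F w) * dOmBar G w - dOmBar F w * dag2 (G w)) / denom2 F G w)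

def bCoef2₂ (F G : Bicomplex → Bicomplex) (w : Bicomplex) : Bicomplex :=
  (F w * dOmBar G w - dOmBar F w * G w) / denom2 F G w

def aCoef2₃ (F G : Bicomplex → Bicomplex) (w : Bicomplex) : Bicomplex :=
  -((dag3 (F w) * dOmDag3 G w - dOmDag3 F w * dag3 (G w)) / denom2 F G w)

def bCoef2₃ (F G : Bicomplex → Bicomplex) (w : Bicomplex) : Bicomplex :=
  (F w * dOmDag3 G w - dOmDag3 F w * G w) / denom2 F G w

def Acoef2 (F G : Bicomplex → Bicomplex) (w : Bicomplex) : Bicomplex :=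
  -((dag2 (F w) * dOm G w - dOm F w * dag2 (G w)) / denom2 F G w)

def Bcoef2 (F G : Bicomplex → Bicomplex) (w : Bicomplex) : Bicomplex :=
  (F w * dOm G w - dOm F w * G w) / denom2 F G w

/-! Characteristic coefficients with respect to the `†₃` conjugation (`j` case). -/

def denom3 (F G : Bicomplex → Bicomplex) (w : Bicomplex) : Bicomplex :=
  F w * dag3 (G w) - dag3 (F w) * G w

def aCoef3₁ (F G : Bicomplex → Bicomplex) (w : Bicomplex) : Bicomplex :=
  -((dag1 (F w) * dOmDag1 G w - dOmDag1 F w * dag1 (G w)) / denom3 F G w)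

def bCoef3₁ (F G : Bicomplex → Bicomplex) (w : Bicomplex) : Bicomplex :=
  (F w * dOmDag1 G w - dOmDag1 F w * G w) / denom3 F G w

def aCoef3₂ (F G : Bicomplex → Bicomplex) (w : Bicomplex) : Bicomplex :=
  -((dag2 (F w) * dOmBar G w - dOmBar F w * dag2 (G w)) / denom3 F G w)

def bCoef3₂ (F G : Bicomplex → Bicomplex) (w : Bicomplex) : Bicomplex :=
  (F w * dOmBar G w - dOmBar F w * G w) / denom3 F G w

def aCoef3₃ (F G : Bicomplex → Bicomplex) (w : Bicomplex) : Bicomplex :=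
  -((dag3 (F w) * dOmDag3 G w - dOmDag3 F w * dag3 (G w)) / denom3 F G w)

def bCoef3₃ (F G : Bicomplex → Bicomplex) (w : Bicomplex) : Bicomplex :=
  (F w * dOmDag3 G w - dOmDag3 F w * G w) / denom3 F G w

def Acoef3 (F G : Bicomplex → Bicomplex) (w : Bicomplex) : Bicomplex :=
  -((dag3 (F w) * dOm G w - dOm F w * dag3 (G w)) / denom3 F G w)

def Bcoef3 (F G : Bicomplex → Bicomplex) (w : Bicomplex) : Bicomplex :=
  (F w * dOm G w - dOm F w * G w) / denom3 F G w

/-! Classical (Bers) pseudoanalytic function theory in `ℂ(i₁)`. -/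

/-- A complex (in `i₁`) generating pair on `D ⊆ ℂ(i₁)`. -/
def ComplexGenPair (Fe Ge : ℂ → ℂ) (D : Set ℂ) : Prop :=
  ContDiffOn ℝ 2 Fe D ∧ ContDiffOn ℝ 2 Ge D ∧
    ∀ z ∈ D, ((starRingEnd ℂ) (Fe z) * Ge z).im ≠ 0

/-- The unique real `λ₀` with `w(z₀) = λ₀ F(z₀) + μ₀ G(z₀)`. -/
def lamBers (Fe Ge we : ℂ → ℂ) (z₀ : ℂ) : ℝ :=
  ((starRingEnd ℂ) (we z₀) * Ge z₀).im / ((starRingEnd ℂ) (Fe z₀) * Ge z₀).im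

/-- The unique real `μ₀` with `w(z₀) = λ₀ F(z₀) + μ₀ G(z₀)`. -/
def muBers (Fe Ge we : ℂ → ℂ) (z₀ : ℂ) : ℝ :=
  -(((starRingEnd ℂ) (we z₀) * Fe z₀).im / ((starRingEnd ℂ) (Fe z₀) * Ge z₀).im)

/-- `w_e` has Bers `(F_e,G_e)`-derivative `d` at `z₀`. -/
def HasBersDerivAt (Fe Ge we : ℂ → ℂ) (d z₀ : ℂ) : Prop :=
  Tendsto
    (fun z => (we z - (lamBers Fe Ge we z₀ : ℂ) * Fe z - (muBers Fe Ge we z₀ : ℂ) * Ge z)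
        / (z - z₀))
    (𝓝[≠] z₀) (𝓝 d)

/-- `w_e` is `(F_e,G_e)`-pseudoanalytic (in the sense of Bers) on `D`. -/
def BersPseudoanalyticOn (Fe Ge we : ℂ → ℂ) (D : Set ℂ) : Prop :=
  ∀ z ∈ D, ∃ d, HasBersDerivAt Fe Ge we d z

/-- `∂_z̄ = ½(∂ₓ + i ∂_y)` for functions `ℂ(i₁) → ℂ(i₁)`. -/
def dzbarC (g : ℂ → ℂ) (z : ℂ) : ℂ :=
  (deriv (fun t : ℝ => g (z + t)) 0 + Complex.I * deriv (fun t : ℝ => g (z + t * Complex.I)) 0) / 2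

/-- The Bers characteristic coefficient `a_{(F_e,G_e)}`. -/
def aBers (Fe Ge : ℂ → ℂ) (z : ℂ) : ℂ :=
  -(((starRingEnd ℂ) (Fe z) * dzbarC Ge z - dzbarC Fe z * (starRingEnd ℂ) (Ge z)) /
    (Fe z * (starRingEnd ℂ) (Ge z) - (starRingEnd ℂ) (Fe z) * Ge z))

/-- The Bers characteristic coefficient `b_{(F_e,G_e)}`. -/
def bBers (Fe Ge : ℂ → ℂ) (z : ℂ) : ℂ :=
  (Fe z * dzbarC Ge z - dzbarC Fe z * Ge z) /
    (Fe z * (starRingEnd ℂ) (Ge z) - (starRingEnd ℂ) (Fe z) * Ge z)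

/-- `(F, G)` is the `i₂e`-generating pair associated to complex generating pairs
`(F_{e1}, G_{e1})` on `D₁` and `(F_{e2}, G_{e2})` on `D₂`. -/
def I2eGenPair (Fe1 Ge1 Fe2 Ge2 : ℂ → ℂ) (D₁ D₂ : Set ℂ)
    (F G : Bicomplex → Bicomplex) : Prop :=
  ComplexGenPair Fe1 Ge1 D₁ ∧ ComplexGenPair Fe2 Ge2 D₂ ∧
  (∀ w, F w = ofComplex (Fe1 (P1 w)) * e1 + ofComplex (Fe2 (P2 w)) * e2) ∧
  (∀ w, G w = ofComplex (Ge1 (P1 w)) * e1 + ofComplex (Ge2 (P2 w)) * e2)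

end Bicomplex

open Bicomplex

/-!
Write `∂₁ = ∂_{z₁}`, `∂₂ = ∂_{z₂}`, `αₖ = ∂ₖ f₀ / f₀` and `Aₖ = ∂ₖφ - αₖφ`. For `ℂ(i₁)`-valued `φ`
one has `(∂_ω - (∂_ω f₀ / f₀)C)φ = (A₁ - A₂ i₂) / 2`, and expanding `∂_ω̄` and the product with
`∂_ω f₀ / f₀` shows that four times the right-hand side has scalar part
`(∂₁ + α₁)A₁ + (∂₂ + α₂)A₂` and `i₂`-part `∂₂A₁ - ∂₁A₂ + α₁A₂ - α₂A₁`. By the quotient rule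
`(∂ₖ + αₖ)Aₖ = ∂ₖ²φ - (∂ₖ² f₀ / f₀)φ`, so the scalar part is `Δ_ℂφ - (Δ_ℂ f₀ / f₀)φ = (Δ_ℂ - ν)φ`,
while the `i₂`-part vanishes because `∂₁∂₂ = ∂₂∂₁` on `C²` functions.
-/

namespace Bicomplex

variable {g f φ : Bicomplex → ℂ} {w : Bicomplex}

lemma continuous_ofProd : Continuous ofProd :=
  continuous_induced_rng.2 continuous_id

lemma ofProd_toProd_add_smul (w e : Bicomplex) (t : ℝ) :
    ofProd (toProd w + t • toProd e) = w + ofReal t * e := by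
  ext <;> simp [ofProd, toProd, ofReal, Complex.real_smul]

@[simp] lemma add_ofReal_zero_mul (w e : Bicomplex) : w + ofReal 0 * e = w := by
  ext <;> simp [ofReal]

lemma image_toProd_mem_nhds {Ω : Set Bicomplex} (hΩ : IsOpen Ω) (hw : w ∈ Ω) :
    toProd '' Ω ∈ 𝓝 (toProd w) := by
  have himage : toProd '' Ω = ofProd ⁻¹' Ω := by
    ext p
    exact ⟨by rintro ⟨v, hv, rfl⟩; exact hv, fun hp => ⟨ofProd p, hp, rfl⟩⟩
  rw [himage]
  exact (hΩ.preimage continuous_ofProd).mem_nhds hw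

lemma CContDiffOn.contDiffAt {n : ℕ∞} {Ω : Set Bicomplex} (hg : CContDiffOn n g Ω)
    (hΩ : IsOpen Ω) (hw : w ∈ Ω) : ContDiffAt ℝ n (g ∘ ofProd) (toProd w) :=
  ContDiffOn.contDiffAt hg (image_toProd_mem_nhds hΩ hw)

lemma hasDerivAt_pd (hg : DifferentiableAt ℝ (g ∘ ofProd) (toProd w)) (e : Bicomplex) :
    HasDerivAt (fun t : ℝ => g (w + ofReal t * e))
      (fderiv ℝ (g ∘ ofProd) (toProd w) (toProd e)) 0 := by
  have hline : HasDerivAt (fun t : ℝ => toProd w + t • toProd e) (toProd e) 0 := by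
    simpa using ((hasDerivAt_id (0 : ℝ)).smul_const (toProd e)).const_add (toProd w)
  have hcomp := HasFDerivAt.comp_hasDerivAt (f := fun t : ℝ => toProd w + t • toProd e) 0
    (by simpa using hg.hasFDerivAt) hline
  simpa only [Function.comp_def, ofProd_toProd_add_smul] using hcomp

lemma pd_eq_fderiv (hg : DifferentiableAt ℝ (g ∘ ofProd) (toProd w)) (e : Bicomplex) :
    pd e g w = fderiv ℝ (g ∘ ofProd) (toProd w) (toProd e) :=
  (hasDerivAt_pd hg e).deriv

lemma pdExists_of_differentiableAt (hg : DifferentiableAt ℝ (g ∘ ofProd) (toProd w))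
    (e : Bicomplex) : pdExists e g w :=
  (hasDerivAt_pd hg e).differentiableAt

lemma pd_comp_ofProd_eventuallyEq {p : ℂ × ℂ} (hg : ContDiffAt ℝ 1 (g ∘ ofProd) p)
    (e : Bicomplex) : pd e g ∘ ofProd =ᶠ[𝓝 p] fun q => fderiv ℝ (g ∘ ofProd) q (toProd e) := by
  filter_upwards [hg.eventually (by simp)] with q hq
  exact pd_eq_fderiv (hq.differentiableAt one_ne_zero) e

lemma differentiableAt_fderiv_apply {𝕜 E F : Type*} [NontriviallyNormedField 𝕜]
    [NormedAddCommGroup E] [NormedSpace 𝕜 E] [NormedAddCommGroup F] [NormedSpace 𝕜 F]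
    {G : E → F} {p : E} (hG : ContDiffAt 𝕜 2 G p) (u : E) :
    DifferentiableAt 𝕜 (fun q => fderiv 𝕜 G q u) p :=
  ((hG.fderiv_right (m := 1) le_rfl).differentiableAt one_ne_zero).clm_apply
    (differentiableAt_const u)

lemma differentiableAt_pd {p : ℂ × ℂ} (hg : ContDiffAt ℝ 2 (g ∘ ofProd) p) (e : Bicomplex) :
    DifferentiableAt ℝ (pd e g ∘ ofProd) p :=
  (differentiableAt_fderiv_apply hg _).congr_of_eventuallyEq
    (pd_comp_ofProd_eventuallyEq (hg.of_le one_le_two) e)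

lemma pd_pd (hg : ContDiffAt ℝ 2 (g ∘ ofProd) (toProd w)) (e e' : Bicomplex) :
    pd e (pd e' g) w = fderiv ℝ (fderiv ℝ (g ∘ ofProd)) (toProd w) (toProd e) (toProd e') := by
  have hd : DifferentiableAt ℝ (fderiv ℝ (g ∘ ofProd)) (toProd w) :=
    (hg.fderiv_right (m := 1) le_rfl).differentiableAt one_ne_zero
  rw [pd_eq_fderiv (differentiableAt_pd hg e'),
    (pd_comp_ofProd_eventuallyEq (hg.of_le one_le_two) e').fderiv_eq,
    fderiv_clm_apply hd (differentiableAt_const _)]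
  simp

lemma pd_pd_comm (hg : ContDiffAt ℝ 2 (g ∘ ofProd) (toProd w)) (e e' : Bicomplex) :
    pd e (pd e' g) w = pd e' (pd e g) w := by
  rw [pd_pd hg, pd_pd hg]
  exact hg.isSymmSndFDerivAt (by simp) _ _

section rules

variable {e : Bicomplex} {h : Bicomplex → ℂ}

@[simp] lemma pd_const (k : ℂ) : pd e (fun _ => k) w = 0 := by
  simp [pd]

lemma pd_neg : pd e (fun v => -g v) w = -pd e g w :=
  deriv.fun_neg

lemma pd_div_const (k : ℂ) : pd e (fun v => g v / k) w = pd e g w / k :=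
  deriv_div_const k

lemma pd_const_mul (k : ℂ) (hg : pdExists e g w) : pd e (fun v => k * g v) w = k * pd e g w :=
  deriv_const_mul k hg

lemma pd_sub (hg : pdExists e g w) (hh : pdExists e h w) :
    pd e (fun v => g v - h v) w = pd e g w - pd e h w :=
  deriv_fun_sub hg hh

lemma pd_mul (hg : pdExists e g w) (hh : pdExists e h w) :
    pd e (fun v => g v * h v) w = pd e g w * h w + g w * pd e h w := by
  have hmul := deriv_fun_mul hg hh
  rwa [add_ofReal_zero_mul] at hmul

lemma pd_div (hg : pdExists e g w) (hh : pdExists e h w) (h0 : h w ≠ 0) :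
    pd e (fun v => g v / h v) w = (pd e g w * h w - g w * pd e h w) / h w ^ 2 := by
  have hdiv := deriv_fun_div hg hh (by rwa [add_ofReal_zero_mul])
  rwa [add_ofReal_zero_mul] at hdiv

end rules

def wirtinger (a b : Bicomplex) (g : Bicomplex → ℂ) (w : Bicomplex) : ℂ :=
  (pd a g w - I * pd b g w) / 2

lemma dz1_eq_wirtinger : dz1 = wirtinger 1 i1 := rfl

lemma dz2_eq_wirtinger : dz2 = wirtinger i2 jj := rfl

section wirtinger

variable {a b c d : Bicomplex}

lemma wirtinger_neg : wirtinger a b (fun v => -g v) w = -wirtinger a b g w := by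
  simp only [wirtinger, pd_neg]
  ring

lemma wirtinger_div_const (k : ℂ) : wirtinger a b (fun v => g v / k) w = wirtinger a b g w / k := by
  simp only [wirtinger, pd_div_const]
  ring

lemma differentiableAt_wirtinger {p : ℂ × ℂ} (hg : ContDiffAt ℝ 2 (g ∘ ofProd) p) :
    DifferentiableAt ℝ (wirtinger a b g ∘ ofProd) p := by
  simpa only [Function.comp_def, wirtinger, div_eq_mul_inv] using
    ((differentiableAt_pd hg a).fun_sub ((differentiableAt_pd hg b).const_mul I)).mul_const
      (2⁻¹ : ℂ)

lemma pd_wirtinger (hg : ContDiffAt ℝ 2 (g ∘ ofProd) (toProd w)) (e : Bicomplex) :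
    pd e (wirtinger c d g) w = (pd e (pd c g) w - I * pd e (pd d g) w) / 2 := by
  have hc := pdExists_of_differentiableAt (differentiableAt_pd hg c) e
  have hd := pdExists_of_differentiableAt (differentiableAt_pd hg d) e
  rw [show wirtinger c d g = fun v => (pd c g v - I * pd d g v) / 2 from rfl, pd_div_const,
    pd_sub (h := fun v => I * pd d g v) hc (hd.const_mul I), pd_const_mul I hd]

lemma wirtinger_wirtinger (hg : ContDiffAt ℝ 2 (g ∘ ofProd) (toProd w)) :
    wirtinger a b (wirtinger c d g) w =
      (pd a (pd c g) w - I * pd a (pd d g) w - I * pd b (pd c g) w - pd b (pd d g) w) / 4 := by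
  rw [wirtinger, pd_wirtinger hg, pd_wirtinger hg]
  linear_combination pd b (pd d g) w / 4 * I_sq

lemma wirtinger_comm (hg : ContDiffAt ℝ 2 (g ∘ ofProd) (toProd w)) :
    wirtinger a b (wirtinger c d g) w = wirtinger c d (wirtinger a b g) w := by
  rw [wirtinger_wirtinger hg, wirtinger_wirtinger hg, pd_pd_comm hg c a, pd_pd_comm hg c b,
    pd_pd_comm hg d a, pd_pd_comm hg d b]
  ring

lemma wirtinger_sub_div_mul {u v : Bicomplex → ℂ}
    (hu : DifferentiableAt ℝ (u ∘ ofProd) (toProd w))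
    (hv : DifferentiableAt ℝ (v ∘ ofProd) (toProd w))
    (hf : DifferentiableAt ℝ (f ∘ ofProd) (toProd w))
    (hφ : DifferentiableAt ℝ (φ ∘ ofProd) (toProd w)) (hf0 : f w ≠ 0) :
    wirtinger a b (fun x => u x - v x / f x * φ x) w =
      wirtinger a b u w - ((wirtinger a b v w * f w - v w * wirtinger a b f w) / f w ^ 2 * φ w
        + v w / f w * wirtinger a b φ w) := by
  have hvf : DifferentiableAt ℝ ((fun x => v x / f x) ∘ ofProd) (toProd w) := by
    simpa only [Function.comp_def, div_eq_mul_inv] using hv.fun_mul (hf.fun_inv hf0)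
  have hvfφ : DifferentiableAt ℝ ((fun x => v x / f x * φ x) ∘ ofProd) (toProd w) :=
    hvf.fun_mul hφ
  simp only [wirtinger, pd_sub (pdExists_of_differentiableAt hu _)
    (pdExists_of_differentiableAt hvfφ _), pd_mul (pdExists_of_differentiableAt hvf _)
    (pdExists_of_differentiableAt hφ _), pd_div (pdExists_of_differentiableAt hv _)
    (pdExists_of_differentiableAt hf _) hf0]
  ring

/-- For a derivation `D` this is `f · D(φ / f)`. -/
def twistedDeriv (D : (Bicomplex → ℂ) → Bicomplex → ℂ) (f φ : Bicomplex → ℂ) :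
    Bicomplex → ℂ :=
  fun v => D φ v - D f v / f v * φ v

lemma wirtinger_twistedDeriv (hf : ContDiffAt ℝ 2 (f ∘ ofProd) (toProd w))
    (hφ : ContDiffAt ℝ 2 (φ ∘ ofProd) (toProd w)) (hf0 : f w ≠ 0) :
    wirtinger a b (twistedDeriv (wirtinger c d) f φ) w =
      wirtinger a b (wirtinger c d φ) w
        - ((wirtinger a b (wirtinger c d f) w * f w - wirtinger c d f w * wirtinger a b f w)
            / f w ^ 2 * φ w + wirtinger c d f w / f w * wirtinger a b φ w) :=
  wirtinger_sub_div_mul (differentiableAt_wirtinger hφ) (differentiableAt_wirtinger hf)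
    (hf.differentiableAt two_ne_zero) (hφ.differentiableAt two_ne_zero) hf0

lemma wirtinger_twistedDeriv_add (hf : ContDiffAt ℝ 2 (f ∘ ofProd) (toProd w))
    (hφ : ContDiffAt ℝ 2 (φ ∘ ofProd) (toProd w)) (hf0 : f w ≠ 0) :
    wirtinger a b (twistedDeriv (wirtinger a b) f φ) w
        + wirtinger a b f w / f w * twistedDeriv (wirtinger a b) f φ w =
      wirtinger a b (wirtinger a b φ) w - wirtinger a b (wirtinger a b f) w / f w * φ w := by
  rw [wirtinger_twistedDeriv hf hφ hf0, twistedDeriv]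
  field_simp
  ring

lemma wirtinger_twistedDeriv_comm (hf : ContDiffAt ℝ 2 (f ∘ ofProd) (toProd w))
    (hφ : ContDiffAt ℝ 2 (φ ∘ ofProd) (toProd w)) (hf0 : f w ≠ 0) :
    wirtinger c d (twistedDeriv (wirtinger a b) f φ) w
        + wirtinger a b f w / f w * twistedDeriv (wirtinger c d) f φ w =
      wirtinger a b (twistedDeriv (wirtinger c d) f φ) w
        + wirtinger c d f w / f w * twistedDeriv (wirtinger a b) f φ w := by
  rw [wirtinger_twistedDeriv hf hφ hf0, wirtinger_twistedDeriv hf hφ hf0, twistedDeriv,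
    twistedDeriv, wirtinger_comm hf (a := c), wirtinger_comm hφ (a := c)]
  field_simp
  ring

end wirtinger

lemma lapC_eq_wirtinger (g : Bicomplex → ℂ) (w : Bicomplex) :
    lapC g w = wirtinger 1 i1 (wirtinger 1 i1 g) w + wirtinger i2 jj (wirtinger i2 jj g) w :=
  rfl

@[simp] lemma sub_z1 (w v : Bicomplex) : (w - v).z1 = w.z1 - v.z1 := by
  simp [sub_eq_add_neg]

@[simp] lemma sub_z2 (w v : Bicomplex) : (w - v).z2 = w.z2 - v.z2 := by
  simp [sub_eq_add_neg]

lemma s1_mk (g h : Bicomplex → ℂ) : s1 (fun v => ⟨g v, h v⟩) = g := rfl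

lemma s2_mk (g h : Bicomplex → ℂ) : s2 (fun v => ⟨g v, h v⟩) = h := rfl

lemma dOm_ofComplex (g : Bicomplex → ℂ) (w : Bicomplex) :
    dOm (fun u => ofComplex (g u)) w = ⟨dz1 g w / 2, -(dz2 g w / 2)⟩ := by
  ext <;> simp only [dOm, dZ1, dZ2, dz1_eq_wirtinger, dz2_eq_wirtinger, wirtinger, s1_mk, s2_mk,
    pd_const, ofComplex, i2, mul_z1, mul_z2, sub_z1, sub_z2] <;> ring

lemma inv_ofComplex (c : ℂ) : (ofComplex c)⁻¹ = ofComplex c⁻¹ := by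
  show (⟨c / (c ^ 2 + 0 ^ 2), -0 / (c ^ 2 + 0 ^ 2)⟩ : Bicomplex) = ⟨c⁻¹, 0⟩
  rcases eq_or_ne c 0 with rfl | hc
  · simp
  · ext <;> field_simp <;> simp

lemma mk_mul_ofComplex (x y c : ℂ) : (⟨x, y⟩ : Bicomplex) * ofComplex c = ⟨x * c, y * c⟩ := by
  ext <;> simp [ofComplex]

lemma mk_div_ofComplex (x y c : ℂ) : (⟨x, y⟩ : Bicomplex) / ofComplex c = ⟨x / c, y / c⟩ := by
  show (⟨x, y⟩ : Bicomplex) * (ofComplex c)⁻¹ = _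
  rw [inv_ofComplex, mk_mul_ofComplex, div_eq_mul_inv, div_eq_mul_inv]

lemma dag2_ofComplex (c : ℂ) : dag2 (ofComplex c) = ofComplex c := by
  ext <;> simp [dag2, ofComplex]

lemma dOm_sub_logDeriv_mul_dag2 (f φ : Bicomplex → ℂ) (v : Bicomplex) :
    dOm (fun u => ofComplex (φ u)) v
        - dOm (fun u => ofComplex (f u)) v / ofComplex (f v) * dag2 (ofComplex (φ v)) =
      ⟨twistedDeriv dz1 f φ v / 2, -(twistedDeriv dz2 f φ v / 2)⟩ := by
  rw [dOm_ofComplex, dOm_ofComplex, mk_div_ofComplex, dag2_ofComplex, mk_mul_ofComplex]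
  ext <;> simp only [sub_z1, sub_z2, twistedDeriv] <;> ring

lemma dOmBar_mk (g h : Bicomplex → ℂ) (w : Bicomplex) :
    dOmBar (fun v => ⟨g v, h v⟩) w = ⟨(dz1 g w - dz2 h w) / 2, (dz1 h w + dz2 g w) / 2⟩ := by
  ext <;> simp only [dOmBar, dZ1, dZ2, s1_mk, s2_mk, ofComplex, i2, mul_z1, mul_z2, add_z1,
    add_z2] <;> ring

lemma dOmBar_add_logDeriv_mul_dag2 (f A B : Bicomplex → ℂ) (w : Bicomplex) :
    dOmBar (fun v => ⟨A v / 2, -(B v / 2)⟩) w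
        + dOm (fun u => ofComplex (f u)) w / ofComplex (f w) * dag2 ⟨A w / 2, -(B w / 2)⟩ =
      ⟨(dz1 A w + dz2 B w + dz1 f w / f w * A w + dz2 f w / f w * B w) / 4,
        (dz2 A w - dz1 B w + dz1 f w / f w * B w - dz2 f w / f w * A w) / 4⟩ := by
  rw [dOmBar_mk, dOm_ofComplex, mk_div_ofComplex]
  simp only [dz1_eq_wirtinger, dz2_eq_wirtinger, wirtinger_neg, wirtinger_div_const]
  ext <;> simp only [dag2, add_z1, add_z2, mul_z1, mul_z2] <;> ring

end Bicomplex

/-- Factorization of the complexified Schrödinger operator: if `f₀` is a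
nonvanishing `C²` solution of `(Δ_ℂ - ν)f₀ = 0` on `Ω`, then for every `ℂ(i₁)`-valued `C²`
function `φ` on `Ω`,
`(Δ_ℂ - ν)φ = 4(∂_ω̄ + (∂_ω f₀/f₀)C)(∂_ω - (∂_ω f₀/f₀)C)φ`. -/
theorem factorization_complexified_schrodinger (Ω : Set Bicomplex) (hΩ : IsOpen Ω)
    (ν f₀ : Bicomplex → ℂ)
    (hf₀sm : CContDiffOn 2 f₀ Ω)
    (hf₀ne : ∀ w ∈ Ω, f₀ w ≠ 0)
    (hf₀sol : ∀ w ∈ Ω, lapC f₀ w - ν w * f₀ w = 0)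
    (φ : Bicomplex → ℂ) (hφ : CContDiffOn 2 φ Ω) :
    ∀ w ∈ Ω,
      ofComplex (lapC φ w - ν w * φ w) =
        ofComplex 4 *
          (dOmBar
              (fun v =>
                dOm (fun u => ofComplex (φ u)) v -
                  (dOm (fun u => ofComplex (f₀ u)) v / ofComplex (f₀ v)) *
                    dag2 (ofComplex (φ v))) w +
            (dOm (fun u => ofComplex (f₀ u)) w / ofComplex (f₀ w)) *
              dag2
                (dOm (fun u => ofComplex (φ u)) w -
                  (dOm (fun u => ofComplex (f₀ u)) w / ofComplex (f₀ w)) *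
                    dag2 (ofComplex (φ w)))) := by
  intro w hw
  have hf₀w := hf₀sm.contDiffAt hΩ hw
  have hφw := hφ.contDiffAt hΩ hw
  have hf0 := hf₀ne w hw
  have hν : ν w = lapC f₀ w / f₀ w := by
    rw [eq_div_iff hf0]
    linear_combination -hf₀sol w hw
  have hdz1 := wirtinger_twistedDeriv_add (a := 1) (b := i1) hf₀w hφw hf0
  have hdz2 := wirtinger_twistedDeriv_add (a := i2) (b := jj) hf₀w hφw hf0
  have hmixed := wirtinger_twistedDeriv_comm (a := 1) (b := i1) (c := i2) (d := jj) hf₀w hφw hf0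
  simp only [dOm_sub_logDeriv_mul_dag2, dOmBar_add_logDeriv_mul_dag2]
  rw [hν, lapC_eq_wirtinger, lapC_eq_wirtinger]
  simp only [dz1_eq_wirtinger, dz2_eq_wirtinger]
  ext
  · simp only [ofComplex, mul_z1, zero_mul, sub_zero]
    linear_combination -hdz1 - hdz2
  · simp only [ofComplex, mul_z2, zero_mul, add_zero]
    linear_combination -hmixed
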